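/- arXiv:2311.08872 — 3 statements merged into one kernel-verified Lean document; each statement's English description precedes it below -/
import Mathlib

section
/- For any β > 0 there exists a constant C > 0 such that for all α ≥ 1, the integral ∫₀^∞ exp(−α·x^{1/β}/√(1+x^{1/β})) dx ≤ C·α^{−β}. -/
open MeasureTheory Real Set

lemma aux_integrable {p b : ℝ} (hp : 0 < p) (hb : 0 < b) :
    IntegrableOn (fun x => Real.exp (-b * x ^ p)) (Set.Ioi (0:ℝ)) := by
  refine (integrableOn_Ioi_comp_rpow_iff' (fun y => Real.exp (-b * y ^ p)) (p := p⁻¹)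
    (by positivity)).mp ?_
  have h0 : IntegrableOn (fun x : ℝ => x ^ (p⁻¹ - 1) * Real.exp (-b * x ^ (1:ℝ)))
      (Set.Ioi 0) :=
    integrableOn_rpow_mul_exp_neg_mul_rpow (by simp; positivity) (by norm_num) hb
  refine h0.congr_fun (fun x hx => ?_) measurableSet_Ioi
  have hx0 : (0:ℝ) < x := hx
  rw [smul_eq_mul, ← Real.rpow_mul hx0.le, inv_mul_cancel₀ hp.ne', Real.rpow_one]
  simp

theorem stmt0 (β : ℝ) (hβ : 0 < β) :
    ∃ C > 0, ∀ α : ℝ, 1 ≤ α →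
      (∫ x in Set.Ioi (0:ℝ),
        Real.exp (-α * x ^ (1/β) / Real.sqrt (1 + x ^ (1/β)))) ≤ C * α ^ (-β) := by
  have hΓ1 : 0 < Real.Gamma (β + 1) := Real.Gamma_pos_of_pos (by linarith)
  have hΓ2 : 0 < Real.Gamma (2 * β + 1) := Real.Gamma_pos_of_pos (by linarith)
  refine ⟨Real.sqrt 2 ^ β * Real.Gamma (β + 1) + Real.sqrt 2 ^ (2*β) * Real.Gamma (2*β + 1),
    by positivity, fun α hα => ?_⟩
  have hα0 : (0:ℝ) < α := lt_of_lt_of_le one_pos hα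
  set b : ℝ := α / Real.sqrt 2 with hbdef
  have hb0 : 0 < b := by positivity
  have hint1 : IntegrableOn (fun x => Real.exp (-b * x ^ (1/β))) (Set.Ioi (0:ℝ)) :=
    aux_integrable (by positivity) hb0
  have hint2 : IntegrableOn (fun x => Real.exp (-b * x ^ (1/(2*β)))) (Set.Ioi (0:ℝ)) :=
    aux_integrable (by positivity) hb0
  have hsum : IntegrableOn
      (fun x => Real.exp (-b * x ^ (1/β)) + Real.exp (-b * x ^ (1/(2*β)))) (Set.Ioi (0:ℝ)) :=
    hint1.add hint2
  -- pointwise bound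
  have hpt : ∀ x ∈ Set.Ioi (0:ℝ),
      Real.exp (-α * x ^ (1/β) / Real.sqrt (1 + x ^ (1/β))) ≤
        Real.exp (-b * x ^ (1/β)) + Real.exp (-b * x ^ (1/(2*β))) := by
    intro x hx
    have hx0 : (0:ℝ) < x := hx
    set t : ℝ := x ^ (1/β) with htdef
    have ht0 : 0 < t := Real.rpow_pos_of_pos hx0 _
    have hsq : x ^ (1/(2*β)) = Real.sqrt t := by
      rw [Real.sqrt_eq_rpow, htdef, ← Real.rpow_mul hx0.le]
      congr 1
      field_simp
    have hst : 0 < Real.sqrt (1 + t) := Real.sqrt_pos.mpr (by linarith)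
    rw [hsq]
    rcases le_total t 1 with h1 | h1
    · have key : Real.sqrt (1 + t) ≤ Real.sqrt 2 := Real.sqrt_le_sqrt (by linarith)
      have h2 : b * t ≤ α * t / Real.sqrt (1 + t) := by
        have : α * t / Real.sqrt 2 ≤ α * t / Real.sqrt (1 + t) := by
          gcongr
        calc b * t = α * t / Real.sqrt 2 := by rw [hbdef]; ring
          _ ≤ α * t / Real.sqrt (1 + t) := this
      have : Real.exp (-α * t / Real.sqrt (1 + t)) ≤ Real.exp (-b * t) := by
        apply Real.exp_le_exp.mpr
        rw [neg_mul, neg_mul, neg_div]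
        linarith
      linarith [Real.exp_pos (-b * Real.sqrt t)]
    · have key : Real.sqrt (1 + t) ≤ Real.sqrt 2 * Real.sqrt t := by
        rw [← Real.sqrt_mul (by norm_num : (0:ℝ) ≤ 2)]
        exact Real.sqrt_le_sqrt (by linarith)
      have h2 : b * Real.sqrt t ≤ α * t / Real.sqrt (1 + t) := by
        rw [hbdef, div_mul_eq_mul_div, div_le_div_iff₀ (by positivity) hst]
        calc α * Real.sqrt t * Real.sqrt (1 + t)
            ≤ α * Real.sqrt t * (Real.sqrt 2 * Real.sqrt t) := by
              apply mul_le_mul_of_nonneg_left key (by positivity)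
          _ = α * (Real.sqrt t * Real.sqrt t) * Real.sqrt 2 := by ring
          _ = α * t * Real.sqrt 2 := by rw [Real.mul_self_sqrt ht0.le]
      have : Real.exp (-α * t / Real.sqrt (1 + t)) ≤ Real.exp (-b * Real.sqrt t) := by
        apply Real.exp_le_exp.mpr
        rw [neg_mul, neg_mul, neg_div]
        linarith
      linarith [Real.exp_pos (-b * t)]
  -- integrability of the integrand
  have hmeas : AEStronglyMeasurable
      (fun x : ℝ => Real.exp (-α * x ^ (1/β) / Real.sqrt (1 + x ^ (1/β))))
      (volume.restrict (Set.Ioi (0:ℝ))) := by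
    apply Measurable.aestronglyMeasurable
    fun_prop
  have hf : IntegrableOn
      (fun x : ℝ => Real.exp (-α * x ^ (1/β) / Real.sqrt (1 + x ^ (1/β)))) (Set.Ioi (0:ℝ)) := by
    refine Integrable.mono hsum hmeas ?_
    refine (ae_restrict_iff' measurableSet_Ioi).mpr (Filter.Eventually.of_forall fun x hx => ?_)
    rw [Real.norm_eq_abs, Real.norm_eq_abs, abs_of_pos (Real.exp_pos _),
      abs_of_pos (by positivity)]
    exact hpt x hx
  have hle : (∫ x in Set.Ioi (0:ℝ),
      Real.exp (-α * x ^ (1/β) / Real.sqrt (1 + x ^ (1/β)))) ≤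
      ∫ x in Set.Ioi (0:ℝ),
        (Real.exp (-b * x ^ (1/β)) + Real.exp (-b * x ^ (1/(2*β)))) :=
    setIntegral_mono_on hf hsum measurableSet_Ioi hpt
  have e1 : (-1 : ℝ) / (1/β) = -β := by field_simp
  have e2 : (1 : ℝ) / (1/β) + 1 = β + 1 := by field_simp
  have e3 : (-1 : ℝ) / (1/(2*β)) = -(2*β) := by field_simp
  have e4 : (1 : ℝ) / (1/(2*β)) + 1 = 2*β + 1 := by field_simp
  have hval : (∫ x in Set.Ioi (0:ℝ),
      (Real.exp (-b * x ^ (1/β)) + Real.exp (-b * x ^ (1/(2*β))))) =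
      b ^ (-β) * Real.Gamma (β + 1) + b ^ (-(2*β)) * Real.Gamma (2*β + 1) := by
    rw [integral_add hint1 hint2, integral_exp_neg_mul_rpow (by positivity) hb0,
      integral_exp_neg_mul_rpow (by positivity) hb0, e1, e2, e3, e4]
  have hb1 : b ^ (-β) = Real.sqrt 2 ^ β * α ^ (-β) := by
    rw [hbdef, Real.div_rpow hα0.le (Real.sqrt_nonneg 2), Real.rpow_neg (Real.sqrt_nonneg 2),
      div_eq_mul_inv, inv_inv]
    ring
  have hb2 : b ^ (-(2*β)) ≤ Real.sqrt 2 ^ (2*β) * α ^ (-β) := by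
    have : b ^ (-(2*β)) = Real.sqrt 2 ^ (2*β) * α ^ (-(2*β)) := by
      rw [hbdef, Real.div_rpow hα0.le (Real.sqrt_nonneg 2), Real.rpow_neg (Real.sqrt_nonneg 2),
        div_eq_mul_inv, inv_inv]
      ring
    rw [this]
    have h2 : α ^ (-(2*β)) ≤ α ^ (-β) :=
      Real.rpow_le_rpow_of_exponent_le hα (by linarith)
    have : (0:ℝ) ≤ Real.sqrt 2 ^ (2*β) := by positivity
    nlinarith
  calc (∫ x in Set.Ioi (0:ℝ),
      Real.exp (-α * x ^ (1/β) / Real.sqrt (1 + x ^ (1/β))))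
      ≤ b ^ (-β) * Real.Gamma (β + 1) + b ^ (-(2*β)) * Real.Gamma (2*β + 1) := by
        rw [← hval]; exact hle
    _ ≤ (Real.sqrt 2 ^ β * α ^ (-β)) * Real.Gamma (β + 1) +
        (Real.sqrt 2 ^ (2*β) * α ^ (-β)) * Real.Gamma (2*β + 1) := by
        rw [hb1]
        have := hb2
        nlinarith
    _ = (Real.sqrt 2 ^ β * Real.Gamma (β + 1) + Real.sqrt 2 ^ (2*β) * Real.Gamma (2*β + 1)) *
        α ^ (-β) := by ring
end

section
/- Let Δ_h be a real symmetric negative semidefinite matrix on ℝ^n, let b₀ ≥ 0, τ > 0, and set A = (I − τ b₀ Δ_h)^{−1}. Then for every vector φ ∈ ℝ^n, ‖(−Δ_h)^{1/2}(Aφ − φ)‖² ≤ C b₀² τ² · (‖φ‖² + ‖Δ_h φ‖² + ‖(−Δ_h)^{3/2}φ‖²) for an absolute constant C; equivalently, in Fourier variables with Δ_h having eigenvalues −P(ξ) with P(ξ) ≥ 0, one has |ŷ(ξ) − φ̂(ξ)| = τ P(ξ)|φ̂(ξ)|/(1 + τ P(ξ)) ≤ τ P(ξ)|φ̂(ξ)|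 for each eigenmode ξ, where y = Aφ. -/
/-- The positive semidefinite square root of a positive semidefinite matrix
(as defined in Mathlib of December 2024, since removed). -/
noncomputable def Matrix.PosSemidef.sqrt {n : Type*} [Fintype n] [DecidableEq n]
    {𝕜 : Type*} [RCLike 𝕜] [PartialOrder 𝕜] {A : Matrix n n 𝕜} (hA : A.PosSemidef) : Matrix n n 𝕜 :=
  (hA.1.eigenvectorUnitary : Matrix n n 𝕜) *
    Matrix.diagonal ((↑) ∘ (fun x : ℝ => √x) ∘ hA.1.eigenvalues) *
    (star hA.1.eigenvectorUnitary : Matrix n n 𝕜)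

theorem Matrix.PosSemidef.sqrt_mul_self' {n : ℕ} {A : Matrix (Fin n) (Fin n) ℝ}
    (hA : A.PosSemidef) : hA.sqrt * hA.sqrt = A := by
  have hU : (star hA.1.eigenvectorUnitary : Matrix (Fin n) (Fin n) ℝ) *
      (hA.1.eigenvectorUnitary : Matrix (Fin n) (Fin n) ℝ) = 1 := Unitary.star_mul_self_of_mem (hA.1.eigenvectorUnitary).2
  have hD : Matrix.diagonal ((RCLike.ofReal : ℝ → ℝ) ∘ (fun x : ℝ => √x) ∘ hA.1.eigenvalues) *
      Matrix.diagonal ((RCLike.ofReal : ℝ → ℝ) ∘ (fun x : ℝ => √x) ∘ hA.1.eigenvalues)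
      = Matrix.diagonal ((RCLike.ofReal : ℝ → ℝ) ∘ hA.1.eigenvalues) := by
    rw [Matrix.diagonal_mul_diagonal]
    congr 1; ext i
    simp [Real.mul_self_sqrt (hA.eigenvalues_nonneg i)]
  conv_rhs => rw [hA.1.spectral_theorem, Unitary.conjStarAlgAut_apply]
  unfold Matrix.PosSemidef.sqrt
  rw [← hD]
  simp only [Matrix.mul_assoc]
  rw [← Matrix.mul_assoc _ _ (Matrix.diagonal _ * _), hU, Matrix.one_mul]

theorem stmt12 :
    ∃ C > 0, ∀ (n : ℕ) (Δ : Matrix (Fin n) (Fin n) ℝ) (hΔ : (-Δ).PosSemidef)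
      (b₀ τ : ℝ), 0 ≤ b₀ → 0 < τ → ∀ φ : Fin n → ℝ,
      (∑ i, (hΔ.sqrt.mulVec (((1 - (τ * b₀) • Δ)⁻¹).mulVec φ - φ) i) ^ 2
          ≤ C * b₀ ^ 2 * τ ^ 2 *
            ((∑ i, (φ i) ^ 2) + (∑ i, (Δ.mulVec φ i) ^ 2)
              + ∑ i, ((hΔ.sqrt * hΔ.sqrt * hΔ.sqrt).mulVec φ i) ^ 2)) ∧
      (∀ P c : ℝ, 0 ≤ P →
        |c / (1 + τ * b₀ * P) - c| = τ * b₀ * P * |c| / (1 + τ * b₀ * P) ∧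
        τ * b₀ * P * |c| / (1 + τ * b₀ * P) ≤ τ * b₀ * P * |c|) := by
  refine ⟨1, one_pos, ?_⟩
  intro n Δ hΔ b₀ τ hb hτ φ
  constructor
  · set S := hΔ.sqrt with hSdef
    set c : ℝ := τ * b₀ with hcdef
    have hc0 : 0 ≤ c := mul_nonneg hτ.le hb
    have hSS : S * S = -Δ := hΔ.sqrt_mul_self'
    set M : Matrix (Fin n) (Fin n) ℝ := 1 - c • Δ with hMdef
    have hMeq : M = 1 + c • (S * S) := by
      rw [hSS, smul_neg, hMdef, sub_eq_add_neg]
    have hPSD : (c • (S * S)).PosSemidef := by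
      rw [hSS]
      refine Matrix.PosSemidef.of_dotProduct_mulVec_nonneg ?_ fun x => ?_
      · show Matrix.conjTranspose (c • (-Δ)) = c • (-Δ)
        rw [Matrix.conjTranspose_smul, hΔ.isHermitian.eq, star_trivial]
      · rw [Matrix.smul_mulVec, dotProduct_smul, smul_eq_mul]
        exact mul_nonneg hc0 (hΔ.dotProduct_mulVec_nonneg x)
    have hMpd : M.PosDef := by
      rw [hMeq]
      exact Matrix.PosDef.one.add_posSemidef hPSD
    have hMunit : IsUnit M.det := hMpd.isUnit.map Matrix.detMonoidHom
    have hMinv : M⁻¹ * M = 1 := Matrix.nonsing_inv_mul M hMunit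
    have hMinv' : M * M⁻¹ = 1 := Matrix.mul_nonsing_inv M hMunit
    have hΔeq : Δ = -(S * S) := by rw [hSS, neg_neg]
    have hSΔ3 : S * Δ = -(S * S * S) := by
      rw [hΔeq, Matrix.mul_neg, ← mul_assoc]
    have hSΔ : S * Δ = Δ * S := by
      have h2 : Δ * S = -(S * S * S) := by rw [hΔeq, Matrix.neg_mul]
      rw [hSΔ3, h2]
    have hSM : S * M = M * S := by
      rw [hMdef]
      simp only [Matrix.mul_sub, Matrix.sub_mul, Matrix.mul_one, Matrix.one_mul,
        Matrix.mul_smul, Matrix.smul_mul, hSΔ]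
    have hSMinv : S * M⁻¹ = M⁻¹ * S := by
      calc S * M⁻¹ = M⁻¹ * (M * S) * M⁻¹ := by
            rw [← Matrix.mul_assoc, hMinv, Matrix.one_mul]
        _ = M⁻¹ * (S * M) * M⁻¹ := by rw [← hSM]
        _ = M⁻¹ * S := by
            rw [Matrix.mul_assoc M⁻¹ (S * M) M⁻¹, Matrix.mul_assoc S M M⁻¹, hMinv',
              Matrix.mul_one]
    have herr : M⁻¹ - 1 = c • (M⁻¹ * Δ) := by
      have h : M⁻¹ * (1 - M) = c • (M⁻¹ * Δ) := by
        rw [hMdef]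
        simp [Matrix.mul_sub, Matrix.mul_smul]
      rw [← h, Matrix.mul_sub, Matrix.mul_one, hMinv]
    have hkey : S * (M⁻¹ - 1) = (-c) • (M⁻¹ * (S * S * S)) := by
      rw [herr, Matrix.mul_smul, ← Matrix.mul_assoc, hSMinv, Matrix.mul_assoc, hSΔ3,
        Matrix.mul_neg, smul_neg, neg_smul]
    set w : Fin n → ℝ := (S * S * S).mulVec φ with hw
    set u : Fin n → ℝ := M⁻¹.mulVec w with hu
    have hvec : S.mulVec (M⁻¹.mulVec φ - φ) = (-c) • u := by
      have h1 : S.mulVec (M⁻¹.mulVec φ - φ) = (S * (M⁻¹ - 1)).mulVec φ := by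
        rw [Matrix.mul_sub, Matrix.mul_one, Matrix.sub_mulVec, ← Matrix.mulVec_mulVec,
          Matrix.mulVec_sub]
      rw [h1, hkey, Matrix.smul_mulVec, hu, hw, Matrix.mulVec_mulVec]
    have hMu : M.mulVec u = w := by
      rw [hu, Matrix.mulVec_mulVec, hMinv', Matrix.one_mulVec]
    have hwuv : w = u + c • ((S * S).mulVec u) := by
      rw [← hMu, hMeq, Matrix.add_mulVec, Matrix.one_mulVec, Matrix.smul_mulVec]
    have hdot : dotProduct w w = dotProduct u u
        + 2 * c * dotProduct u ((S * S).mulVec u)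
        + c ^ 2 * dotProduct ((S * S).mulVec u) ((S * S).mulVec u) := by
      rw [hwuv]
      simp only [dotProduct_add, add_dotProduct, dotProduct_smul,
        smul_dotProduct, smul_eq_mul]
      rw [dotProduct_comm ((S * S).mulVec u) u]
      ring
    have huv : 0 ≤ dotProduct u ((S * S).mulVec u) := by
      have h := hΔ.dotProduct_mulVec_nonneg u
      rw [← hSS] at h
      simpa using h
    have hvv : 0 ≤ dotProduct ((S * S).mulVec u) ((S * S).mulVec u) :=
      Finset.sum_nonneg fun i _ => mul_self_nonneg _
    have hcontr : dotProduct u u ≤ dotProduct w w := by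
      rw [hdot]
      nlinarith
    have hLHS : ∑ i, (S.mulVec (M⁻¹.mulVec φ - φ) i) ^ 2
        = c ^ 2 * dotProduct u u := by
      rw [hvec]
      simp only [Pi.smul_apply, smul_eq_mul, dotProduct, mul_pow]
      rw [Finset.mul_sum]
      congr 1; ext i; ring
    have hww : dotProduct w w = ∑ i, ((S * S * S).mulVec φ i) ^ 2 := by
      simp [hw, dotProduct, pow_two]
    have h1 : 0 ≤ ∑ i, (φ i) ^ 2 := Finset.sum_nonneg fun i _ => sq_nonneg _
    have h2 : 0 ≤ ∑ i, (Δ.mulVec φ i) ^ 2 := Finset.sum_nonneg fun i _ => sq_nonneg _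
    calc ∑ i, (S.mulVec (M⁻¹.mulVec φ - φ) i) ^ 2
        = c ^ 2 * dotProduct u u := hLHS
      _ ≤ c ^ 2 * dotProduct w w :=
          mul_le_mul_of_nonneg_left hcontr (sq_nonneg c)
      _ ≤ 1 * b₀ ^ 2 * τ ^ 2 *
            ((∑ i, (φ i) ^ 2) + (∑ i, (Δ.mulVec φ i) ^ 2)
              + ∑ i, ((S * S * S).mulVec φ i) ^ 2) := by
          rw [hww]
          have hceq : c ^ 2 = 1 * b₀ ^ 2 * τ ^ 2 := by rw [hcdef]; ring
          rw [hceq]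
          have hc2 : (0:ℝ) ≤ 1 * b₀ ^ 2 * τ ^ 2 := by positivity
          nlinarith [mul_nonneg hc2 h1, mul_nonneg hc2 h2]
  · intro P c hP
    have hd0 : 0 ≤ τ * b₀ * P := by positivity
    have hd : 0 < 1 + τ * b₀ * P := by linarith
    constructor
    · rw [div_sub' hd.ne', abs_div, abs_of_pos hd]
      congr 1
      rw [show c - (1 + τ * b₀ * P) * c = -(τ * b₀ * P * c) by ring, abs_neg, abs_mul,
        abs_of_nonneg hd0]
    · rw [div_le_iff₀ hd]
      have h0 : 0 ≤ τ * b₀ * P * |c| := mul_nonneg hd0 (abs_nonneg c)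
      nlinarith
end

section
/- Let b₀, b₁ ≥ 0 with b₁ ≤ b₀, let Δ_h be symmetric negative semidefinite, τ > 0 such that I − τ(b₀/2)Δ_h is invertible, and define the backward iteration φ^m = A φ^{m+1} with A = (I − τ(b₀/2)Δ_h)^{−1}(I + τ(b₁/2)Δ_h), ending at a prescribed φ^M. Then the discrete energy estimate τ Σ_{m=0}^{M−1}(b₀‖(−Δ_h)^{1/2}φ^m‖² + b₁‖(−Δ_h)^{1/2}φ^{m+1}‖²) ≤ ‖φ^M‖² + (τ² b₁²/4)‖Δ_h φ^M‖² holds. -/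
open Matrix

theorem stmt16 {n : ℕ} (b₀ b₁ τ : ℝ) (hb₁ : 0 ≤ b₁) (hb : b₁ ≤ b₀) (hτ : 0 < τ)
    (Δ : Matrix (Fin n) (Fin n) ℝ) (hΔ : (-Δ).PosSemidef)
    (hinv : IsUnit (1 - (τ * (b₀ / 2)) • Δ))
    (M : ℕ) (φ : ℕ → Fin n → ℝ)
    (hiter : ∀ m < M,
      φ m = (((1 - (τ * (b₀ / 2)) • Δ)⁻¹) * (1 + (τ * (b₁ / 2)) • Δ)).mulVec (φ (m + 1))) :
    τ * ∑ m ∈ Finset.range M,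
        (b₀ * (-(φ m ⬝ᵥ Δ.mulVec (φ m))) + b₁ * (-(φ (m + 1) ⬝ᵥ Δ.mulVec (φ (m + 1)))))
      ≤ φ M ⬝ᵥ φ M + (τ ^ 2 * b₁ ^ 2 / 4) * (Δ.mulVec (φ M) ⬝ᵥ Δ.mulVec (φ M)) := by
  set c₀ := τ * (b₀ / 2) with hc₀
  set c₁ := τ * (b₁ / 2) with hc₁
  set B : Matrix (Fin n) (Fin n) ℝ := 1 - c₀ • Δ with hB
  set C : Matrix (Fin n) (Fin n) ℝ := 1 + c₁ • Δ with hC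
  have hsym : Δᵀ = Δ := by
    have h := hΔ.1
    rw [Matrix.IsHermitian, Matrix.conjTranspose_neg, neg_inj] at h
    simpa using h
  have hdot : ∀ x y : Fin n → ℝ, Δ.mulVec x ⬝ᵥ y = x ⬝ᵥ Δ.mulVec y := by
    intro x y
    rw [Matrix.dotProduct_mulVec, ← Matrix.mulVec_transpose, hsym]
  have hnn : ∀ v : Fin n → ℝ, 0 ≤ v ⬝ᵥ v := fun v =>
    Finset.sum_nonneg fun i _ => mul_self_nonneg _
  set E : ℕ → ℝ := fun k => φ k ⬝ᵥ φ k +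
    (τ ^ 2 * b₁ ^ 2 / 4) * (Δ.mulVec (φ k) ⬝ᵥ Δ.mulVec (φ k)) with hE
  have key : ∀ m < M,
      τ * (b₀ * (-(φ m ⬝ᵥ Δ.mulVec (φ m))) + b₁ * (-(φ (m + 1) ⬝ᵥ Δ.mulVec (φ (m + 1)))))
        ≤ E (m + 1) - E m := by
    intro m hm
    have hBC : B.mulVec (φ m) = C.mulVec (φ (m + 1)) := by
      rw [hiter m hm, Matrix.mulVec_mulVec, ← Matrix.mul_assoc,
        Matrix.mul_nonsing_inv _ ((Matrix.isUnit_iff_isUnit_det _).mp hinv), Matrix.one_mul]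
    have hx : B.mulVec (φ m) = φ m - c₀ • Δ.mulVec (φ m) := by
      simp [hB, Matrix.sub_mulVec, Matrix.smul_mulVec]
    have hψ : C.mulVec (φ (m+1)) = φ (m+1) + c₁ • Δ.mulVec (φ (m+1)) := by
      simp [hC, Matrix.add_mulVec, Matrix.smul_mulVec]
    have heq : (φ m - c₀ • Δ.mulVec (φ m)) ⬝ᵥ (φ m - c₀ • Δ.mulVec (φ m))
        = (φ (m + 1) + c₁ • Δ.mulVec (φ (m + 1))) ⬝ᵥ (φ (m + 1) + c₁ • Δ.mulVec (φ (m + 1))) := by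
      rw [← hx, ← hψ, hBC]
    have h1 := hdot (φ m) (φ m)
    have h2 := hdot (φ (m+1)) (φ (m+1))
    simp only [dotProduct_sub, sub_dotProduct, dotProduct_add, add_dotProduct,
      dotProduct_smul, smul_dotProduct, smul_eq_mul] at heq
    rw [h1, h2] at heq
    rw [hc₀, hc₁] at heq
    have hΔx : (0:ℝ) ≤ Δ.mulVec (φ m) ⬝ᵥ Δ.mulVec (φ m) := hnn _
    have hb₀ : 0 ≤ b₀ := le_trans hb₁ hb
    simp only [hE]
    nlinarith [sq_nonneg τ, mul_nonneg (mul_nonneg (sq_nonneg τ) (sub_nonneg.mpr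
      (mul_self_le_mul_self hb₁ hb))) hΔx]
  calc τ * ∑ m ∈ Finset.range M,
        (b₀ * (-(φ m ⬝ᵥ Δ.mulVec (φ m))) + b₁ * (-(φ (m + 1) ⬝ᵥ Δ.mulVec (φ (m + 1)))))
      = ∑ m ∈ Finset.range M,
        τ * (b₀ * (-(φ m ⬝ᵥ Δ.mulVec (φ m))) + b₁ * (-(φ (m + 1) ⬝ᵥ Δ.mulVec (φ (m + 1))))) := by
        rw [Finset.mul_sum]
    _ ≤ ∑ m ∈ Finset.range M, (E (m + 1) - E m) :=
        Finset.sum_le_sum fun m hm => key m (Finset.mem_range.mp hm)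
    _ = E M - E 0 := Finset.sum_range_sub E M
    _ ≤ E M := by
        have : 0 ≤ E 0 := add_nonneg (hnn _)
          (mul_nonneg (by positivity) (hnn _))
        linarith
    _ = _ := rfl
end
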